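/- arXiv:1810.02769 — 5 statements merged into one kernel-verified Lean document; each statement's English description precedes it below -/
import Mathlib

section
/- Axiom A11 is valid: for every finite set of agents A, every group G ⊆ A, every G-announcement ψ_G, and every formula φ of L_CoRGAL, the formula [⟨G⟩]φ → ⟨A∖G, ψ_G⟩φ is true at every pointed epistemic model (M,w). -/
/- Formalization of Coalition and Relativised Group Announcement Logic (CoRGAL). -/

namespace CoRGAL

/-- Purely epistemic formulas (the fragment L_EL). -/
inductive EForm (Agt : Type) : Type
  | atom : ℕ → EForm Agt
  | neg  : EForm Agt → EForm Agt
  | and  : EForm Agt → EForm Agt → EForm Agt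
  | know : Agt → EForm Agt → EForm Agt

/-- Formulas of L_CoRGAL: atoms, ¬, ∧, K_a, [φ]ψ, [G,χ]φ, [⟨G⟩]φ. -/
inductive Form (Agt : Type) : Type
  | atom  : ℕ → Form Agt
  | neg   : Form Agt → Form Agt
  | and   : Form Agt → Form Agt → Form Agt
  | know  : Agt → Form Agt → Form Agt
  | ann   : Form Agt → Form Agt → Form Agt          -- [φ]ψ
  | group : Finset Agt → Form Agt → Form Agt → Form Agt  -- [G,χ]φ
  | coal  : Finset Agt → Form Agt → Form Agt        -- [⟨G⟩]φ

variable {Agt : Type}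

def Form.imp (φ ψ : Form Agt) : Form Agt := .neg (.and φ (.neg ψ))
def Form.iff' (φ ψ : Form Agt) : Form Agt := .and (φ.imp ψ) (ψ.imp φ)
def Form.bot : Form Agt := .and (.atom 0) (.neg (.atom 0))
def Form.top : Form Agt := .neg Form.bot

def EForm.toForm : EForm Agt → Form Agt
  | .atom p => .atom p
  | .neg φ => .neg φ.toForm
  | .and φ ψ => .and φ.toForm ψ.toForm
  | .know a φ => .know a φ.toForm

/-- The G-announcement ⋀_{i ∈ G} K_i (f i), with all f i epistemic. -/
noncomputable def GAnn (G : Finset Agt) (f : Agt → EForm Agt) : Form Agt :=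
  (G.toList.map fun i => Form.know i (f i).toForm).foldr Form.and Form.top

/-- Epistemic models: states, an equivalence relation for each agent, a valuation. -/
structure Model (Agt : Type) where
  W : Type
  rel : Agt → W → W → Prop
  rel_equiv : ∀ a, Equivalence (rel a)
  val : ℕ → W → Prop

/-- Updated model: restriction to the states satisfying S. -/
def Model.restrict (M : Model Agt) (S : M.W → Prop) : Model Agt where
  W := {v : M.W // S v}
  rel a u v := M.rel a u.1 v.1
  rel_equiv a := ⟨fun u => (M.rel_equiv a).refl u.1,
    fun h => (M.rel_equiv a).symm h, fun h h' => (M.rel_equiv a).trans h h'⟩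
  val p v := M.val p v.1

/-- Satisfaction for purely epistemic formulas (standard S5 semantics). -/
def esat (M : Model Agt) : M.W → EForm Agt → Prop
  | w, .atom p => M.val p w
  | w, .neg φ => ¬ esat M w φ
  | w, .and φ ψ => esat M w φ ∧ esat M w ψ
  | w, .know a φ => ∀ v, M.rel a w v → esat M v φ

/-- Truth of the G-announcement ⋀_{i∈G} K_i (f i) at (M,w). -/
def gsat (M : Model Agt) (w : M.W) (G : Finset Agt) (f : Agt → EForm Agt) : Prop :=
  ∀ i ∈ G, ∀ v, M.rel i w v → esat M v (f i)

variable [DecidableEq Agt] [Fintype Agt]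

/-- Satisfaction for L_CoRGAL.
[φ]ψ: if φ is true then ψ holds in the model restricted to φ-states.
[G,χ]φ: χ is true and for every G-announcement ψ_G, [ψ_G ∧ χ]φ.
[⟨G⟩]φ: for every G-announcement ψ_G there is an (A∖G)-announcement χ such
that if ψ_G is true then ⟨ψ_G ∧ χ⟩φ. -/
def sat : (M : Model Agt) → M.W → Form Agt → Prop
  | M, w, .atom p => M.val p w
  | M, w, .neg φ => ¬ sat M w φ
  | M, w, .and φ ψ => sat M w φ ∧ sat M w ψ
  | M, w, .know a φ => ∀ v, M.rel a w v → sat M v φ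
  | M, w, .ann φ ψ =>
      ∀ h : sat M w φ, sat (M.restrict fun v => sat M v φ) ⟨w, h⟩ ψ
  | M, w, .group G χ φ =>
      sat M w χ ∧ ∀ f : Agt → EForm Agt,
        ∀ h : gsat M w G f ∧ sat M w χ,
          sat (M.restrict fun v => gsat M v G f ∧ sat M v χ) ⟨w, h⟩ φ
  | M, w, .coal G φ =>
      ∀ f : Agt → EForm Agt, ∃ g : Agt → EForm Agt,
        gsat M w G f →
          ∃ h : gsat M w G f ∧ gsat M w Gᶜ g,
            sat (M.restrict fun v => gsat M v G f ∧ gsat M v Gᶜ g) ⟨w, h⟩ φ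

/-- Validity: truth at every pointed epistemic model. -/
def valid (φ : Form Agt) : Prop := ∀ (M : Model Agt) (w : M.W), sat M w φ

/-- The dual coalition operator ⟨[G]⟩φ := ¬[⟨G⟩]¬φ. -/
def coalDia (G : Finset Agt) (φ : Form Agt) : Form Agt := .neg (.coal G (.neg φ))

/-- Necessity forms η ::= ♯ | φ → η | K_a η | [φ]η. -/
inductive NForm (Agt : Type) : Type
  | hole : NForm Agt
  | imp  : Form Agt → NForm Agt → NForm Agt
  | know : Agt → NForm Agt → NForm Agt
  | ann  : Form Agt → NForm Agt → NForm Agt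

/-- η(φ): replace the placeholder ♯ by φ. -/
def NForm.subst : NForm Agt → Form Agt → Form Agt
  | .hole, φ => φ
  | .imp ψ η, φ => ψ.imp (η.subst φ)
  | .know a η, φ => .know a (η.subst φ)
  | .ann ψ η, φ => .ann ψ (η.subst φ)

/-- Instances of propositional tautologies (treating non-Boolean subformulas as atoms). -/
def Tautology (φ : Form Agt) : Prop :=
  ∀ v : Form Agt → Prop,
    (∀ ψ, v (Form.neg ψ) ↔ ¬ v ψ) →
    (∀ ψ χ, v (Form.and ψ χ) ↔ (v ψ ∧ v χ)) →
    v φ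

/-- The axiom system CoRGAL: theorems. -/
inductive Thm {Agt : Type} [DecidableEq Agt] [Fintype Agt] : Form Agt → Prop
  | taut {φ : Form Agt} : Tautology φ → Thm φ
  | a1 (a : Agt) (φ ψ : Form Agt) :
      Thm ((Form.know a (φ.imp ψ)).imp ((Form.know a φ).imp (Form.know a ψ)))
  | a2 (a : Agt) (φ : Form Agt) : Thm ((Form.know a φ).imp φ)
  | a3 (a : Agt) (φ : Form Agt) : Thm ((Form.know a φ).imp (Form.know a (Form.know a φ)))
  | a4 (a : Agt) (φ : Form Agt) :
      Thm ((Form.neg (Form.know a φ)).imp (Form.know a (Form.neg (Form.know a φ))))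
  | a5 (φ : Form Agt) (p : ℕ) : Thm ((Form.ann φ (.atom p)).iff' (φ.imp (.atom p)))
  | a6 (φ ψ : Form Agt) : Thm ((Form.ann φ (.neg ψ)).iff' (φ.imp (.neg (Form.ann φ ψ))))
  | a7 (φ ψ χ : Form Agt) :
      Thm ((Form.ann φ (.and ψ χ)).iff' ((Form.ann φ ψ).and (Form.ann φ χ)))
  | a8 (φ : Form Agt) (a : Agt) (ψ : Form Agt) :
      Thm ((Form.ann φ (.know a ψ)).iff' (φ.imp (.know a (Form.ann φ ψ))))
  | a9 (φ ψ χ : Form Agt) :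
      Thm ((Form.ann φ (.ann ψ χ)).iff' (Form.ann (φ.and (Form.ann φ ψ)) χ))
  | a10 (G : Finset Agt) (χ φ : Form Agt) (f : Agt → EForm Agt) :
      Thm ((Form.group G χ φ).imp (χ.and (Form.ann ((GAnn G f).and χ) φ)))
  | a11 (G : Finset Agt) (φ : Form Agt) (f : Agt → EForm Agt) :
      Thm ((Form.coal G φ).imp (.neg (Form.group Gᶜ (GAnn G f) (.neg φ))))
  | mp {φ ψ : Form Agt} : Thm (φ.imp ψ) → Thm φ → Thm ψ
  | necK (a : Agt) {φ : Form Agt} : Thm φ → Thm (Form.know a φ)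
  | necAnn (ψ : Form Agt) {φ : Form Agt} : Thm φ → Thm (Form.ann ψ φ)
  | necGroup (G : Finset Agt) (χ : Form Agt) {φ : Form Agt} : Thm φ → Thm (Form.group G χ φ)
  | necCoal (G : Finset Agt) {φ : Form Agt} : Thm φ → Thm (Form.coal G φ)
  | r5 {η : NForm Agt} {G : Finset Agt} {χ φ : Form Agt} :
      (∀ f : Agt → EForm Agt, Thm (η.subst (χ.and (Form.ann ((GAnn G f).and χ) φ)))) →
      Thm (η.subst (Form.group G χ φ))
  | r6 {η : NForm Agt} {G : Finset Agt} {φ : Form Agt} :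
      (∀ f : Agt → EForm Agt, Thm (η.subst (.neg (Form.group Gᶜ (GAnn G f) (.neg φ))))) →
      Thm (η.subst (Form.coal G φ))

/-- A theory: contains all theorems, closed under modus ponens (R0), R5 and R6. -/
structure IsTheory (x : Set (Form Agt)) : Prop where
  mem_of_thm : ∀ {φ : Form Agt}, Thm φ → φ ∈ x
  mp : ∀ {φ ψ : Form Agt}, φ.imp ψ ∈ x → φ ∈ x → ψ ∈ x
  r5 : ∀ (η : NForm Agt) (G : Finset Agt) (χ φ : Form Agt),
        (∀ f : Agt → EForm Agt, η.subst (χ.and (Form.ann ((GAnn G f).and χ) φ)) ∈ x) →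
        η.subst (Form.group G χ φ) ∈ x
  r6 : ∀ (η : NForm Agt) (G : Finset Agt) (φ : Form Agt),
        (∀ f : Agt → EForm Agt, η.subst (.neg (Form.group Gᶜ (GAnn G f) (.neg φ))) ∈ x) →
        η.subst (Form.coal G φ) ∈ x

def Consistent (x : Set (Form Agt)) : Prop := Form.bot ∉ x
def Maximal (x : Set (Form Agt)) : Prop := ∀ φ : Form Agt, φ ∈ x ∨ Form.neg φ ∈ x
def MCT (x : Set (Form Agt)) : Prop := IsTheory x ∧ Consistent x ∧ Maximal x

/-- The canonical model: worlds are maximal consistent theories. -/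
def canonicalModel (Agt : Type) [DecidableEq Agt] [Fintype Agt] : Model Agt where
  W := {x : Set (Form Agt) // MCT x}
  rel a x y := {φ : Form Agt | Form.know a φ ∈ x.1} = {φ : Form Agt | Form.know a φ ∈ y.1}
  rel_equiv _ := ⟨fun _ => rfl, Eq.symm, Eq.trans⟩
  val p x := Form.atom p ∈ x.1

/-- Size of a formula. -/
def fsize : Form Agt → ℕ
  | .atom _ => 1
  | .neg φ => fsize φ + 1
  | .know _ φ => fsize φ + 1
  | .group _ _ φ => fsize φ + 1
  | .coal _ φ => fsize φ + 1
  | .and φ ψ => fsize φ + fsize ψ + 1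
  | .ann ψ φ => fsize ψ + 3 * fsize φ

/-- The [,]-depth. -/
def dG : Form Agt → ℕ
  | .atom _ => 0
  | .neg φ => dG φ
  | .know _ φ => dG φ
  | .coal _ φ => dG φ
  | .and φ ψ => max (dG φ) (dG ψ)
  | .ann ψ φ => dG ψ + dG φ
  | .group _ χ φ => dG χ + dG φ + 1

/-- The [⟨⟩]-depth. -/
def dC : Form Agt → ℕ
  | .atom _ => 0
  | .neg φ => dC φ
  | .know _ φ => dC φ
  | .and φ ψ => max (dC φ) (dC ψ)
  | .ann ψ φ => dC ψ + dC φ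
  | .group _ χ φ => dC χ + dC φ
  | .coal _ φ => dC φ + 1

/-- The well-founded order <^{Size}_{[,],[⟨⟩]}. -/
def measLt (φ ψ : Form Agt) : Prop :=
  dC φ < dC ψ ∨ (dC φ = dC ψ ∧ (dG φ < dG ψ ∨ (dG φ = dG ψ ∧ fsize φ < fsize ψ)))

end CoRGAL

open CoRGAL

namespace CoRGAL

variable {Agt : Type} [DecidableEq Agt] [Fintype Agt]

lemma sat_toForm (M : Model Agt) (w : M.W) (φ : EForm Agt) :
    sat M w φ.toForm ↔ esat M w φ := by
  induction φ generalizing w <;> simp [EForm.toForm, sat, esat, *]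

lemma sat_foldr (M : Model Agt) (w : M.W) (f : Agt → EForm Agt) (l : List Agt) :
    sat M w ((l.map fun i => Form.know i (f i).toForm).foldr Form.and Form.top) ↔
      ∀ i ∈ l, ∀ v, M.rel i w v → esat M v (f i) := by
  induction l with
  | nil => simp [sat, Form.top, Form.bot]
  | cons a l ih => simp [sat, sat_toForm, ih]

lemma sat_GAnn (M : Model Agt) (w : M.W) (G : Finset Agt) (f : Agt → EForm Agt) :
    sat M w (GAnn G f) ↔ gsat M w G f := by
  rw [GAnn, sat_foldr]
  constructor
  · intro h i hi; exact h i (Finset.mem_toList.2 hi)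
  · intro h i hi; exact h i (Finset.mem_toList.1 hi)

lemma sat_restrict_congr (M : Model Agt) {S S' : M.W → Prop} (h : S = S')
    {w : M.W} (hw : S w) (hw' : S' w) {φ : Form Agt} :
    sat (M.restrict S) ⟨w, hw⟩ φ → sat (M.restrict S') ⟨w, hw'⟩ φ := by
  subst h; exact id

end CoRGAL

/-- Axiom A11 is valid: [⟨G⟩]φ → ⟨A∖G, ψ_G⟩φ holds at every pointed model,
where ⟨H,χ⟩φ := ¬[H,χ]¬φ. -/
theorem statement1 (Agt : Type) [DecidableEq Agt] [Fintype Agt]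
    (G : Finset Agt) (f : Agt → EForm Agt) (φ : Form Agt)
    (M : Model Agt) (w : M.W) :
    sat M w ((Form.coal G φ).imp (Form.neg (Form.group Gᶜ (GAnn G f) (Form.neg φ)))) := by
  simp only [Form.imp, sat, not_and, not_not, not_forall]
  intro hcoal hgroup
  obtain ⟨hG, hall⟩ := hgroup
  have hgf : gsat M w G f := (sat_GAnn M w G f).1 hG
  obtain ⟨g, hg⟩ := hcoal f
  obtain ⟨⟨h1, h2⟩, hsat⟩ := hg hgf
  have hpred : (fun v => gsat M v G f ∧ gsat M v Gᶜ g)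
      = (fun v => gsat M v Gᶜ g ∧ sat M v (GAnn G f)) := by
    funext v
    rw [sat_GAnn]
    exact propext and_comm
  exact hall ⟨g, ⟨h2, hG⟩, sat_restrict_congr M hpred ⟨h1, h2⟩ _ hsat⟩
end

section
/- For every group G ⊆ A and every formula φ of L_CoRGAL, the formula ⟨[G]⟩φ → ⟨G⟩[A∖G]φ is valid: if G has an announcement such that after it is made simultaneously with any announcement by A∖G, φ holds, then G has an announcement after which, whatever A∖G subsequently announce, φ holds. -/
open CoRGAL

namespace CoRGAL

variable {Agt : Type}

/-- Epistemic implication. -/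
def eimp (a b : EForm Agt) : EForm Agt := .neg (.and a (.neg b))

/-- Epistemic truth constant. -/
def etop : EForm Agt := .neg (.and (.atom 0) (.neg (.atom 0)))

lemma esat_etop (M : Model Agt) (w : M.W) : esat M w etop := by
  simp [etop, esat]

lemma esat_eimp (M : Model Agt) (w : M.W) (a b : EForm Agt) :
    esat M w (eimp a b) ↔ (esat M w a → esat M w b) := by
  simp [eimp, esat]

/-- The conjunction ⋀_{i∈G} K_i (f i) as an epistemic formula. -/
noncomputable def bigK (G : Finset Agt) (f : Agt → EForm Agt) : EForm Agt :=
  (G.toList.map fun i => EForm.know i (f i)).foldr .and etop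

lemma esat_bigK_list (M : Model Agt) (w : M.W) (f : Agt → EForm Agt) :
    ∀ l : List Agt,
      esat M w ((l.map fun i => EForm.know i (f i)).foldr .and etop) ↔
      (∀ i ∈ l, ∀ v, M.rel i w v → esat M v (f i)) := by
  intro l
  induction l with
  | nil => simpa using esat_etop M w
  | cons a l ih =>
      simp only [List.map_cons, List.foldr_cons, List.mem_cons]
      constructor
      · rintro ⟨h1, h2⟩ i hi
        rcases hi with rfl | hi
        · exact h1
        · exact (ih.mp h2) i hi
      · intro h
        exact ⟨h a (Or.inl rfl), ih.mpr fun i hi => h i (Or.inr hi)⟩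

lemma esat_bigK (M : Model Agt) (w : M.W) (G : Finset Agt) (f : Agt → EForm Agt) :
    esat M w (bigK G f) ↔ gsat M w G f := by
  unfold bigK gsat
  rw [esat_bigK_list]
  constructor
  · intro h i hi; exact h i (Finset.mem_toList.mpr hi)
  · intro h i hi; exact h i (Finset.mem_toList.mp hi)

/-- Relativization of an epistemic formula to an announcement Ψ. -/
def relE (Ψ : EForm Agt) : EForm Agt → EForm Agt
  | .atom p => .atom p
  | .neg χ => .neg (relE Ψ χ)
  | .and χ₁ χ₂ => .and (relE Ψ χ₁) (relE Ψ χ₂)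
  | .know a χ => .know a (eimp Ψ (relE Ψ χ))

lemma esat_relE {M : Model Agt} {S : M.W → Prop} {Ψ : EForm Agt}
    (hΨ : ∀ u, esat M u Ψ ↔ S u) :
    ∀ (χ : EForm Agt) (v : M.W) (hv : S v),
      esat (M.restrict S) ⟨v, hv⟩ χ ↔ esat M v (relE Ψ χ) := by
  intro χ
  induction χ with
  | atom p => intro v hv; simp [esat, relE, Model.restrict]
  | neg χ ih => intro v hv; simp only [esat, relE]; rw [ih v hv]
  | and χ₁ χ₂ ih1 ih2 =>
      intro v hv; simp only [esat, relE]; rw [ih1 v hv, ih2 v hv]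
  | know a χ ih =>
      intro v hv
      constructor
      · intro H u hu
        rw [esat_eimp]
        intro hΨu
        have hSu : S u := (hΨ u).mp hΨu
        have := H ⟨u, hSu⟩ hu
        exact (ih u hSu).mp this
      · intro H u hu
        have := H u.1 hu
        rw [esat_eimp] at this
        exact (ih u.1 u.2).mpr (this ((hΨ u.1).mpr u.2))

lemma gsat_restrict {M : Model Agt} {S : M.W → Prop} {Ψ : EForm Agt}
    (hΨ : ∀ u, esat M u Ψ ↔ S u) (H : Finset Agt) (g : Agt → EForm Agt)
    (v : M.W) (hv : S v) :
    gsat (M.restrict S) ⟨v, hv⟩ H g ↔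
      gsat M v H (fun i => eimp Ψ (relE Ψ (g i))) := by
  unfold gsat
  constructor
  · intro h i hi u hu
    rw [esat_eimp]
    intro hΨu
    have hSu : S u := (hΨ u).mp hΨu
    have := h i hi ⟨u, hSu⟩ hu
    exact (esat_relE hΨ (g i) u hSu).mp this
  · intro h i hi u hu
    have := h i hi u.1 hu
    rw [esat_eimp] at this
    exact (esat_relE hΨ (g i) u.1 u.2).mpr (this ((hΨ u.1).mpr u.2))

lemma esat_iso {M N : Model Agt} (e : M.W ≃ N.W)
    (hrel : ∀ a u v, M.rel a u v ↔ N.rel a (e u) (e v))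
    (hval : ∀ p w, M.val p w ↔ N.val p (e w)) :
    ∀ (χ : EForm Agt) (w : M.W), esat M w χ ↔ esat N (e w) χ := by
  intro χ
  induction χ with
  | atom p => intro w; exact hval p w
  | neg χ ih => intro w; simp only [esat]; rw [ih w]
  | and χ₁ χ₂ ih1 ih2 => intro w; simp only [esat]; rw [ih1 w, ih2 w]
  | know a χ ih =>
      intro w
      constructor
      · intro H v hv
        have h1 : M.rel a w (e.symm v) := by
          rw [hrel]; simpa using hv
        have := H (e.symm v) h1
        have := (ih (e.symm v)).mp this
        simpa using this
      · intro H v hv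
        exact (ih v).mpr (H (e v) ((hrel a w v).mp hv))

lemma gsat_iso {M N : Model Agt} (e : M.W ≃ N.W)
    (hrel : ∀ a u v, M.rel a u v ↔ N.rel a (e u) (e v))
    (hval : ∀ p w, M.val p w ↔ N.val p (e w)) (H : Finset Agt)
    (f : Agt → EForm Agt) (w : M.W) :
    gsat M w H f ↔ gsat N (e w) H f := by
  unfold gsat
  constructor
  · intro h i hi v hv
    have h1 : M.rel i w (e.symm v) := by rw [hrel]; simpa using hv
    have := (esat_iso e hrel hval (f i) (e.symm v)).mp (h i hi (e.symm v) h1)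
    simpa using this
  · intro h i hi v hv
    exact (esat_iso e hrel hval (f i) v).mpr (h i hi (e v) ((hrel i w v).mp hv))

/-- Equivalence between restrictions along an isomorphism. -/
def restrictEquiv {M N : Model Agt} (e : M.W ≃ N.W) (S : M.W → Prop)
    (T : N.W → Prop) (h : ∀ v, S v ↔ T (e v)) :
    (M.restrict S).W ≃ (N.restrict T).W where
  toFun v := ⟨e v.1, (h v.1).mp v.2⟩
  invFun v := ⟨e.symm v.1, (h (e.symm v.1)).mpr (by simpa using v.2)⟩
  left_inv v := Subtype.ext (e.symm_apply_apply v.1)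
  right_inv v := Subtype.ext (e.apply_symm_apply v.1)

variable [DecidableEq Agt] [Fintype Agt]

lemma sat_iso : ∀ (φ : Form Agt) (M N : Model Agt) (e : M.W ≃ N.W),
    (∀ a u v, M.rel a u v ↔ N.rel a (e u) (e v)) →
    (∀ p w, M.val p w ↔ N.val p (e w)) →
    ∀ w, sat M w φ ↔ sat N (e w) φ := by
  intro φ
  induction φ with
  | atom p => intro M N e hrel hval w; exact hval p w
  | neg φ ih =>
      intro M N e hrel hval w; simp only [sat]; rw [ih M N e hrel hval w]
  | and φ ψ ih1 ih2 =>
      intro M N e hrel hval w; simp only [sat]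
      rw [ih1 M N e hrel hval w, ih2 M N e hrel hval w]
  | know a φ ih =>
      intro M N e hrel hval w
      simp only [sat]
      constructor
      · intro H v hv
        have h1 : M.rel a w (e.symm v) := by rw [hrel]; simpa using hv
        have := (ih M N e hrel hval (e.symm v)).mp (H (e.symm v) h1)
        simpa using this
      · intro H v hv
        exact (ih M N e hrel hval v).mpr (H (e v) ((hrel a w v).mp hv))
  | ann φ ψ ihφ ihψ =>
      intro M N e hrel hval w
      have hS : ∀ v, sat M v φ ↔ sat N (e v) φ := ihφ M N e hrel hval
      let e' := restrictEquiv e (fun v => sat M v φ) (fun v => sat N v φ) hS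
      have key := ihψ (M.restrict fun v => sat M v φ)
        (N.restrict fun v => sat N v φ) e'
        (fun a u v => hrel a u.1 v.1) (fun p u => hval p u.1)
      simp only [sat]
      constructor
      · intro H h'
        have h := (hS w).mpr h'
        have := (key ⟨w, h⟩).mp (H h)
        have heq : e' ⟨w, h⟩ = (⟨e w, h'⟩ : {v // sat N v φ}) := Subtype.ext rfl
        rwa [heq] at this
      · intro H h
        have h' := (hS w).mp h
        have := H h'
        have heq : e' ⟨w, h⟩ = (⟨e w, h'⟩ : {v // sat N v φ}) := Subtype.ext rfl
        rw [← heq] at this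
        exact (key ⟨w, h⟩).mpr this
  | group H χ φ ihχ ihφ =>
      intro M N e hrel hval w
      have hχ : ∀ v, sat M v χ ↔ sat N (e v) χ := ihχ M N e hrel hval
      simp only [sat]
      constructor
      · rintro ⟨h1, h2⟩
        refine ⟨(hχ w).mp h1, ?_⟩
        intro f hf
        have hS : ∀ v, (gsat M v H f ∧ sat M v χ) ↔
            (gsat N (e v) H f ∧ sat N (e v) χ) := fun v => by
          rw [gsat_iso e hrel hval, hχ v]
        let e' := restrictEquiv e (fun v => gsat M v H f ∧ sat M v χ)
          (fun v => gsat N v H f ∧ sat N v χ) hS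
        have key := ihφ _ _ e' (fun a u v => hrel a u.1 v.1)
          (fun p u => hval p u.1)
        have hf' := (hS w).mpr hf
        have := (key ⟨w, hf'⟩).mp (h2 f hf')
        have heq : e' ⟨w, hf'⟩ =
            (⟨e w, hf⟩ : {v // gsat N v H f ∧ sat N v χ}) := Subtype.ext rfl
        rwa [heq] at this
      · rintro ⟨h1, h2⟩
        refine ⟨(hχ w).mpr h1, ?_⟩
        intro f hf
        have hS : ∀ v, (gsat M v H f ∧ sat M v χ) ↔
            (gsat N (e v) H f ∧ sat N (e v) χ) := fun v => by
          rw [gsat_iso e hrel hval, hχ v]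
        let e' := restrictEquiv e (fun v => gsat M v H f ∧ sat M v χ)
          (fun v => gsat N v H f ∧ sat N v χ) hS
        have key := ihφ _ _ e' (fun a u v => hrel a u.1 v.1)
          (fun p u => hval p u.1)
        have hf' := (hS w).mp hf
        have := h2 f hf'
        have heq : e' ⟨w, hf⟩ =
            (⟨e w, hf'⟩ : {v // gsat N v H f ∧ sat N v χ}) := Subtype.ext rfl
        rw [← heq] at this
        exact (key ⟨w, hf⟩).mpr this
  | coal H φ ihφ =>
      intro M N e hrel hval w
      simp only [sat]
      constructor
      · intro K f
        obtain ⟨g, hg⟩ := K f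
        refine ⟨g, fun hNf => ?_⟩
        have hMf : gsat M w H f := (gsat_iso e hrel hval H f w).mpr hNf
        obtain ⟨h, hsat⟩ := hg hMf
        have hS : ∀ v, (gsat M v H f ∧ gsat M v Hᶜ g) ↔
            (gsat N (e v) H f ∧ gsat N (e v) Hᶜ g) := fun v => by
          rw [gsat_iso e hrel hval, gsat_iso e hrel hval]
        let e' := restrictEquiv e (fun v => gsat M v H f ∧ gsat M v Hᶜ g)
          (fun v => gsat N v H f ∧ gsat N v Hᶜ g) hS
        refine ⟨(hS w).mp h, ?_⟩
        have key := ihφ _ _ e' (fun a u v => hrel a u.1 v.1)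
          (fun p u => hval p u.1)
        have := (key ⟨w, h⟩).mp hsat
        have heq : e' ⟨w, h⟩ =
            (⟨e w, (hS w).mp h⟩ : {v // gsat N v H f ∧ gsat N v Hᶜ g}) :=
          Subtype.ext rfl
        rwa [heq] at this
      · intro K f
        obtain ⟨g, hg⟩ := K f
        refine ⟨g, fun hMf => ?_⟩
        have hNf : gsat N (e w) H f := (gsat_iso e hrel hval H f w).mp hMf
        obtain ⟨h, hsat⟩ := hg hNf
        have hS : ∀ v, (gsat M v H f ∧ gsat M v Hᶜ g) ↔
            (gsat N (e v) H f ∧ gsat N (e v) Hᶜ g) := fun v => by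
          rw [gsat_iso e hrel hval, gsat_iso e hrel hval]
        let e' := restrictEquiv e (fun v => gsat M v H f ∧ gsat M v Hᶜ g)
          (fun v => gsat N v H f ∧ gsat N v Hᶜ g) hS
        refine ⟨(hS w).mpr h, ?_⟩
        have key := ihφ _ _ e' (fun a u v => hrel a u.1 v.1)
          (fun p u => hval p u.1)
        have heq : e' ⟨w, (hS w).mpr h⟩ =
            (⟨e w, h⟩ : {v // gsat N v H f ∧ gsat N v Hᶜ g}) := Subtype.ext rfl
        refine (key ⟨w, (hS w).mpr h⟩).mpr ?_
        rw [heq]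
        exact hsat

lemma sat_top (M : Model Agt) (w : M.W) : sat M w Form.top := by
  simp [Form.top, Form.bot, sat]

end CoRGAL

/-- ⟨[G]⟩φ → ⟨G⟩[A∖G]φ is valid, where ⟨G⟩ψ := ¬[G,⊤]¬ψ and [A∖G]φ := [A∖G,⊤]φ. -/
theorem statement5 (Agt : Type) [DecidableEq Agt] [Fintype Agt]
    (G : Finset Agt) (φ : Form Agt) :
    valid ((coalDia G φ).imp
      (Form.neg (Form.group G Form.top (Form.neg (Form.group Gᶜ Form.top φ))))) := by
  intro M w
  intro hc
  obtain ⟨h1, h2⟩ := hc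
  have hgrp : sat M w (Form.group G Form.top (.neg (Form.group Gᶜ Form.top φ))) :=
    Classical.not_not.mp h2
  obtain ⟨-, hall⟩ := hgrp
  have h1' : ¬ ∀ f : Agt → EForm Agt, ∃ g : Agt → EForm Agt,
      gsat M w G f → ∃ h : gsat M w G f ∧ gsat M w Gᶜ g,
        ¬ sat (M.restrict fun v => gsat M v G f ∧ gsat M v Gᶜ g) ⟨w, h⟩ φ := h1
  push_neg at h1'
  obtain ⟨f, hf⟩ := h1'
  have hgf : gsat M w G f := (hf (fun _ => EForm.atom 0)).1
  have hSw : gsat M w G f ∧ sat M w Form.top := ⟨hgf, sat_top M w⟩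
  apply hall f hSw
  refine ⟨sat_top _ _, ?_⟩
  intro g h'
  -- translate the Gᶜ-announcement g back to M
  have hΨ : ∀ u, esat M u (bigK G f) ↔ (gsat M u G f ∧ sat M u Form.top) := by
    intro u
    rw [esat_bigK]
    exact ⟨fun h => ⟨h, sat_top M u⟩, fun h => h.1⟩
  have htr : ∀ (v : M.W) (hv : gsat M v G f ∧ sat M v Form.top),
      gsat (M.restrict fun v => gsat M v G f ∧ sat M v Form.top) ⟨v, hv⟩ Gᶜ g ↔
        gsat M v Gᶜ (fun i => eimp (bigK G f) (relE (bigK G f) (g i))) :=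
    fun v hv => gsat_restrict hΨ Gᶜ g v hv
  have hg'w : gsat M w Gᶜ (fun i => eimp (bigK G f) (relE (bigK G f) (g i))) :=
    (htr w hSw).mp h'.1
  have hh2 : gsat M w G f ∧
      gsat M w Gᶜ (fun i => eimp (bigK G f) (relE (bigK G f) (g i))) := ⟨hgf, hg'w⟩
  have hsat := (hf (fun i => eimp (bigK G f) (relE (bigK G f) (g i)))).2 hh2
  -- transfer via the isomorphism between the two restricted models
  let e : (M.restrict fun v => gsat M v G f ∧
        gsat M v Gᶜ (fun i => eimp (bigK G f) (relE (bigK G f) (g i)))).W ≃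
      ((M.restrict fun v => gsat M v G f ∧ sat M v Form.top).restrict fun u =>
        gsat (M.restrict fun v => gsat M v G f ∧ sat M v Form.top) u Gᶜ g ∧
        sat (M.restrict fun v => gsat M v G f ∧ sat M v Form.top) u Form.top).W :=
    { toFun := fun v => ⟨⟨v.1, ⟨v.2.1, sat_top M v.1⟩⟩,
        ⟨(htr v.1 ⟨v.2.1, sat_top M v.1⟩).mpr v.2.2, sat_top _ _⟩⟩
      invFun := fun u => ⟨u.1.1, ⟨u.1.2.1, (htr u.1.1 u.1.2).mp u.2.1⟩⟩
      left_inv := fun v => Subtype.ext rfl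
      right_inv := fun u => Subtype.ext (Subtype.ext rfl) }
  have key := sat_iso φ _ _ e (fun a u v => Iff.rfl) (fun p u => Iff.rfl)
  have hres := (key ⟨w, hh2⟩).mp hsat
  have heq : e ⟨w, hh2⟩ = ⟨⟨w, hSw⟩, h'⟩ := Subtype.ext (Subtype.ext rfl)
  rwa [heq] at hres
end

section
/- For all groups G, H ⊆ A and every formula φ of L_CoRGAL, the formula ⟨[G]⟩⟨[H]⟩φ → [⟨A∖(G∪H)⟩]φ is valid. -/
namespace CoRGALAux
open CoRGAL

variable {Agt : Type}

@[simp] lemma esat_atom {M : Model Agt} {w : M.W} {p : ℕ} :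
    esat M w (.atom p) ↔ M.val p w := Iff.rfl
@[simp] lemma esat_neg {M : Model Agt} {w : M.W} {φ : EForm Agt} :
    esat M w (.neg φ) ↔ ¬ esat M w φ := Iff.rfl
@[simp] lemma esat_and {M : Model Agt} {w : M.W} {φ ψ : EForm Agt} :
    esat M w (.and φ ψ) ↔ (esat M w φ ∧ esat M w ψ) := Iff.rfl
@[simp] lemma esat_know {M : Model Agt} {w : M.W} {a : Agt} {φ : EForm Agt} :
    esat M w (.know a φ) ↔ ∀ v, M.rel a w v → esat M v φ := Iff.rfl

/-- The trivially true epistemic formula. -/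
def ETop : EForm Agt := .neg (.and (.atom 0) (.neg (.atom 0)))

@[simp] lemma esat_ETop (M : Model Agt) (w : M.W) : esat M w ETop := by
  simp [ETop]

def EImp (a b : EForm Agt) : EForm Agt := .neg (.and a (.neg b))

lemma esat_EImp {M : Model Agt} {w : M.W} {a b : EForm Agt} :
    esat M w (EImp a b) ↔ (esat M w a → esat M w b) := by
  simp [EImp]

def econj : List (EForm Agt) → EForm Agt
  | [] => ETop
  | φ :: l => .and φ (econj l)

lemma esat_econj {M : Model Agt} {w : M.W} : ∀ l : List (EForm Agt),
    esat M w (econj l) ↔ ∀ φ ∈ l, esat M w φ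
  | [] => by simp [econj]
  | φ :: l => by
      simp only [econj, esat_and, esat_econj l, List.mem_cons]
      constructor
      · rintro ⟨h1, h2⟩ ψ (rfl | hψ)
        · exact h1
        · exact h2 _ hψ
      · intro h; exact ⟨h _ (Or.inl rfl), fun ψ hψ => h _ (Or.inr hψ)⟩

/-- ⋀_{i∈S} K_i (f i) as an epistemic formula. -/
noncomputable def kconj (S : Finset Agt) (f : Agt → EForm Agt) : EForm Agt :=
  econj (S.toList.map fun i => .know i (f i))

lemma esat_kconj {M : Model Agt} {w : M.W} {S : Finset Agt} {f : Agt → EForm Agt} :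
    esat M w (kconj S f) ↔ gsat M w S f := by
  simp only [kconj, esat_econj, List.mem_map, gsat]
  constructor
  · intro h i hi v hv
    exact h _ ⟨i, Finset.mem_toList.2 hi, rfl⟩ v hv
  · rintro h ψ ⟨i, hi, rfl⟩
    exact fun v hv => h i (Finset.mem_toList.1 hi) v hv

/-- Relativization of an epistemic formula by θ. -/
def erel (θ : EForm Agt) : EForm Agt → EForm Agt
  | .atom p => EImp θ (.atom p)
  | .neg φ => EImp θ (.neg (erel θ φ))
  | .and φ ψ => .and (erel θ φ) (erel θ ψ)
  | .know a φ => EImp θ (.know a (erel θ φ))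

lemma esat_erel {M : Model Agt} (θ : EForm Agt) : ∀ (φ : EForm Agt) (w : M.W),
    esat M w (erel θ φ) ↔
      ∀ h : esat M w θ, esat (M.restrict fun v => esat M v θ) ⟨w, h⟩ φ
  | .atom p, w => by
      rw [erel, esat_EImp]
      exact Iff.rfl
  | .neg φ, w => by
      rw [erel, esat_EImp]
      simp only [esat_neg]
      constructor
      · intro h hθ hc
        exact h hθ ((esat_erel θ φ w).2 fun _ => hc)
      · intro h hθ hc
        exact h hθ ((esat_erel θ φ w).1 hc hθ)
  | .and φ ψ, w => by
      rw [erel]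
      simp only [esat_and, esat_erel θ φ w, esat_erel θ ψ w]
      constructor
      · rintro ⟨h1, h2⟩ h; exact ⟨h1 h, h2 h⟩
      · intro h; exact ⟨fun hθ => (h hθ).1, fun hθ => (h hθ).2⟩
  | .know a φ, w => by
      rw [erel, esat_EImp]
      simp only [esat_know]
      constructor
      · intro h hθ v hv
        exact (esat_erel θ φ v.1).1 (h hθ v.1 hv) v.2
      · intro h hθ v hv
        exact (esat_erel θ φ v).2 fun hθv => h hθ ⟨v, hθv⟩ hv

/-- Isomorphism of epistemic models. -/
structure MIso (M N : Model Agt) where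
  e : M.W ≃ N.W
  rel_iff : ∀ a u v, M.rel a u v ↔ N.rel a (e u) (e v)
  val_iff : ∀ p w, M.val p w ↔ N.val p (e w)

def MIso.refl (M : Model Agt) : MIso M M :=
  ⟨Equiv.refl _, fun _ _ _ => Iff.rfl, fun _ _ => Iff.rfl⟩

def MIso.restrict {M N : Model Agt} (I : MIso M N) (S : M.W → Prop) (T : N.W → Prop)
    (hST : ∀ v, S v ↔ T (I.e v)) : MIso (M.restrict S) (N.restrict T) where
  e := { toFun := fun v => ⟨I.e v.1, (hST v.1).1 v.2⟩
         invFun := fun v => ⟨I.e.symm v.1, (hST _).2 (by simpa using v.2)⟩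
         left_inv := fun v => Subtype.ext (by simp)
         right_inv := fun v => Subtype.ext (by simp) }
  rel_iff := fun a u v => I.rel_iff a u.1 v.1
  val_iff := fun p w => I.val_iff p w.1

lemma esat_iso {M N : Model Agt} (I : MIso M N) :
    ∀ (φ : EForm Agt) (w : M.W), esat M w φ ↔ esat N (I.e w) φ
  | .atom p, w => I.val_iff p w
  | .neg φ, w => by simp only [esat_neg, esat_iso I φ w]
  | .and φ ψ, w => by simp only [esat_and, esat_iso I φ w, esat_iso I ψ w]
  | .know a φ, w => by
      simp only [esat_know]
      constructor
      · intro h v hv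
        have h1 : M.rel a w (I.e.symm v) := by
          rw [I.rel_iff]; simpa using hv
        have := (esat_iso I φ (I.e.symm v)).1 (h _ h1)
        simpa using this
      · intro h v hv
        rw [esat_iso I φ v]
        exact h _ ((I.rel_iff a w v).1 hv)

lemma gsat_iso {M N : Model Agt} (I : MIso M N) (w : M.W) (S : Finset Agt)
    (f : Agt → EForm Agt) : gsat M w S f ↔ gsat N (I.e w) S f := by
  rw [← esat_kconj, ← esat_kconj, esat_iso I]

lemma sat_iso [DecidableEq Agt] [Fintype Agt] :
    ∀ (φ : Form Agt) {M N : Model Agt} (I : MIso M N) (w : M.W),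
      sat M w φ ↔ sat N (I.e w) φ
  | .atom p, M, N, I, w => I.val_iff p w
  | .neg φ, M, N, I, w => by simp only [sat, sat_iso φ I w]
  | .and φ ψ, M, N, I, w => by simp only [sat, sat_iso φ I w, sat_iso ψ I w]
  | .know a φ, M, N, I, w => by
      simp only [sat]
      constructor
      · intro h v hv
        have h1 : M.rel a w (I.e.symm v) := by
          rw [I.rel_iff]; simpa using hv
        have := (sat_iso φ I (I.e.symm v)).1 (h _ h1)
        simpa using this
      · intro h v hv
        rw [sat_iso φ I v]
        exact h _ ((I.rel_iff a w v).1 hv)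
  | .ann φ ψ, M, N, I, w => by
      simp only [sat]
      have hpred : ∀ v : M.W, sat M v φ ↔ sat N (I.e v) φ := fun v => sat_iso φ I v
      constructor
      · intro h hN
        have hM := (hpred w).2 hN
        have h2 := (sat_iso ψ (I.restrict (fun v => sat M v φ)
          (fun v => sat N v φ) hpred) ⟨w, hM⟩).1 (h hM)
        have he : ((I.restrict (fun v => sat M v φ) (fun v => sat N v φ) hpred).e ⟨w, hM⟩ :
            (N.restrict fun v => sat N v φ).W) = ⟨I.e w, hN⟩ := Subtype.ext rfl
        rw [he] at h2
        exact h2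
      · intro h hM
        have h2 := h ((hpred w).1 hM)
        have he : ((I.restrict (fun v => sat M v φ) (fun v => sat N v φ) hpred).e ⟨w, hM⟩ :
            (N.restrict fun v => sat N v φ).W) = ⟨I.e w, (hpred w).1 hM⟩ := Subtype.ext rfl
        rw [← he] at h2
        exact (sat_iso ψ (I.restrict (fun v => sat M v φ)
          (fun v => sat N v φ) hpred) ⟨w, hM⟩).2 h2
  | .group S χ φ, M, N, I, w => by
      simp only [sat]
      have hχ : ∀ v : M.W, sat M v χ ↔ sat N (I.e v) χ := fun v => sat_iso χ I v
      have hpred : ∀ f (v : M.W), (gsat M v S f ∧ sat M v χ) ↔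
          (gsat N (I.e v) S f ∧ sat N (I.e v) χ) :=
        fun f v => and_congr (gsat_iso I v S f) (hχ v)
      constructor
      · rintro ⟨h1, h2⟩
        refine ⟨(hχ w).1 h1, fun f hf => ?_⟩
        have hMf := (hpred f w).2 hf
        exact (sat_iso φ (I.restrict (fun v => gsat M v S f ∧ sat M v χ)
          (fun v => gsat N v S f ∧ sat N v χ) (hpred f)) ⟨w, hMf⟩).1 (h2 f hMf)
      · rintro ⟨h1, h2⟩
        refine ⟨(hχ w).2 h1, fun f hf => ?_⟩
        exact (sat_iso φ (I.restrict (fun v => gsat M v S f ∧ sat M v χ)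
          (fun v => gsat N v S f ∧ sat N v χ) (hpred f)) ⟨w, hf⟩).2 (h2 f ((hpred f w).1 hf))
  | .coal S φ, M, N, I, w => by
      simp only [sat]
      have hpred : ∀ f g (v : M.W), (gsat M v S f ∧ gsat M v Sᶜ g) ↔
          (gsat N (I.e v) S f ∧ gsat N (I.e v) Sᶜ g) :=
        fun f g v => and_congr (gsat_iso I v S f) (gsat_iso I v Sᶜ g)
      constructor
      · intro h f
        obtain ⟨g, hg⟩ := h f
        refine ⟨g, fun hgs => ?_⟩
        obtain ⟨hh, hs⟩ := hg ((gsat_iso I w S f).2 hgs)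
        exact ⟨(hpred f g w).1 hh, (sat_iso φ (I.restrict
          (fun v => gsat M v S f ∧ gsat M v Sᶜ g)
          (fun v => gsat N v S f ∧ gsat N v Sᶜ g) (hpred f g)) ⟨w, hh⟩).1 hs⟩
      · intro h f
        obtain ⟨g, hg⟩ := h f
        refine ⟨g, fun hgs => ?_⟩
        obtain ⟨hh, hs⟩ := hg ((gsat_iso I w S f).1 hgs)
        refine ⟨(hpred f g w).2 hh, ?_⟩
        exact (sat_iso φ (I.restrict
          (fun v => gsat M v S f ∧ gsat M v Sᶜ g)
          (fun v => gsat N v S f ∧ gsat N v Sᶜ g) (hpred f g)) ⟨w, (hpred f g w).2 hh⟩).2 hs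

/-- Collapsing a double restriction into one. -/
def doubleIso (M : Model Agt) (S : M.W → Prop) (S' : {v : M.W // S v} → Prop) :
    MIso ((M.restrict S).restrict S') (M.restrict fun v => ∃ h : S v, S' ⟨v, h⟩) where
  e := { toFun := fun v => ⟨v.1.1, v.1.2, v.2⟩
         invFun := fun v => ⟨⟨v.1, v.2.1⟩, v.2.2⟩
         left_inv := fun _ => rfl
         right_inv := fun _ => rfl }
  rel_iff := fun _ _ _ => Iff.rfl
  val_iff := fun _ _ => Iff.rfl

end CoRGALAux
namespace CoRGALAux
open CoRGAL

variable {Agt : Type}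

lemma esat_restrict_congr {M : Model Agt} {S T : M.W → Prop} (hST : ∀ v, S v ↔ T v)
    (φ : EForm Agt) (w : M.W) (hS : S w) (hT : T w) :
    esat (M.restrict S) ⟨w, hS⟩ φ ↔ esat (M.restrict T) ⟨w, hT⟩ φ := by
  have h := esat_iso ((MIso.refl M).restrict S T hST) φ ⟨w, hS⟩
  have he : (((MIso.refl M).restrict S T hST).e ⟨w, hS⟩ : {v : M.W // T v}) = ⟨w, hT⟩ :=
    Subtype.ext rfl
  rw [he] at h
  exact h

lemma sat_restrict_congr [DecidableEq Agt] [Fintype Agt] {M : Model Agt}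
    {S T : M.W → Prop} (hST : ∀ v, S v ↔ T v)
    (φ : Form Agt) (w : M.W) (hS : S w) (hT : T w) :
    sat (M.restrict S) ⟨w, hS⟩ φ ↔ sat (M.restrict T) ⟨w, hT⟩ φ := by
  have h := sat_iso φ ((MIso.refl M).restrict S T hST) ⟨w, hS⟩
  have he : (((MIso.refl M).restrict S T hST).e ⟨w, hS⟩ : {v : M.W // T v}) = ⟨w, hT⟩ :=
    Subtype.ext rfl
  rw [he] at h
  exact h

lemma sat_double [DecidableEq Agt] [Fintype Agt] (M : Model Agt)
    (S : M.W → Prop) (S' : {v : M.W // S v} → Prop) (φ : Form Agt)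
    (u : {v : M.W // S v}) (h2 : S' u) :
    sat ((M.restrict S).restrict S') ⟨u, h2⟩ φ ↔
    sat (M.restrict fun v => ∃ h : S v, S' ⟨v, h⟩) ⟨u.1, u.2, h2⟩ φ := by
  have h := sat_iso φ (doubleIso M S S') ⟨u, h2⟩
  have he : ((doubleIso M S S').e ⟨u, h2⟩ : {v : M.W // ∃ h : S v, S' ⟨v, h⟩})
      = ⟨u.1, u.2, h2⟩ := Subtype.ext rfl
  rw [he] at h
  exact h

def gfun [DecidableEq Agt] (G H : Finset Agt) (χ : Agt → EForm Agt) : Agt → EForm Agt :=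
  fun i => if i ∈ G ∪ H then ETop else χ i

def dfun [DecidableEq Agt] (G H : Finset Agt) (f : Agt → EForm Agt) (θ : EForm Agt)
    (f' : Agt → EForm Agt) : Agt → EForm Agt :=
  fun i => .and (if i ∈ G then f i else ETop) (if i ∈ H then erel θ (f' i) else ETop)

lemma esat_dfun [DecidableEq Agt] {G H : Finset Agt} {f : Agt → EForm Agt} {θ : EForm Agt}
    {f' : Agt → EForm Agt} {M : Model Agt} {w : M.W} (i : Agt) :
    esat M w (dfun G H f θ f' i) ↔
      ((i ∈ G → esat M w (f i)) ∧ (i ∈ H → esat M w (erel θ (f' i)))) := by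
  by_cases hG : i ∈ G <;> by_cases hH : i ∈ H <;> simp [dfun, hG, hH]

end CoRGALAux

open CoRGAL CoRGALAux

/-- ⟨[G]⟩⟨[H]⟩φ → [⟨A∖(G∪H)⟩]φ is valid. -/
theorem statement8 (Agt : Type) [DecidableEq Agt] [Fintype Agt]
    (G H : Finset Agt) (φ : Form Agt) :
    valid ((coalDia G (coalDia H φ)).imp (Form.coal (G ∪ H)ᶜ φ)) := by
  classical
  intro M w hand
  have hpre : sat M w (coalDia G (coalDia H φ)) := hand.1
  have hneg : ¬ sat M w (Form.coal (G ∪ H)ᶜ φ) := hand.2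
  apply hneg
  intro χ
  by_cases hχ : gsat M w (G ∪ H)ᶜ χ
  swap
  · exact ⟨fun _ => ETop, fun h => absurd h hχ⟩
  have hpre2 : ¬ ∀ f : Agt → EForm Agt, ∃ g : Agt → EForm Agt,
      gsat M w G f → ∃ h : gsat M w G f ∧ gsat M w Gᶜ g,
        ¬ sat (M.restrict fun v => gsat M v G f ∧ gsat M v Gᶜ g) ⟨w, h⟩ (coalDia H φ) := hpre
  push_neg at hpre2
  obtain ⟨f, hf⟩ := hpre2
  obtain ⟨hgf, hsat1⟩ := hf (gfun G H χ)
  have hg_iff : ∀ v : M.W, gsat M v Gᶜ (gfun G H χ) ↔ gsat M v (G ∪ H)ᶜ χ := by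
    intro v
    constructor
    · intro h i hi v' hv'
      have hGH : i ∉ G ∪ H := Finset.mem_compl.1 hi
      have hiGc : i ∈ Gᶜ := Finset.mem_compl.2 fun hiG => hGH (Finset.mem_union_left _ hiG)
      have h2 := h i hiGc v' hv'
      simpa [gfun, hGH] using h2
    · intro h i hi v' hv'
      by_cases hGH : i ∈ G ∪ H
      · simp [gfun, hGH]
      · have h2 := h i (Finset.mem_compl.2 hGH) v' hv'
        simpa [gfun, hGH] using h2
  have h1 : gsat M w G f ∧ gsat M w Gᶜ (gfun G H χ) := ⟨hgf, (hg_iff w).2 hχ⟩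
  have hc2 := hsat1 h1
  have hc2' : ¬ ∀ f' : Agt → EForm Agt, ∃ g' : Agt → EForm Agt,
      gsat (M.restrict fun v => gsat M v G f ∧ gsat M v Gᶜ (gfun G H χ)) ⟨w, h1⟩ H f' →
      ∃ h' : gsat (M.restrict fun v => gsat M v G f ∧ gsat M v Gᶜ (gfun G H χ)) ⟨w, h1⟩ H f' ∧
          gsat (M.restrict fun v => gsat M v G f ∧ gsat M v Gᶜ (gfun G H χ)) ⟨w, h1⟩ Hᶜ g',
        ¬ sat ((M.restrict fun v => gsat M v G f ∧ gsat M v Gᶜ (gfun G H χ)).restrict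
            fun v => gsat (M.restrict fun u => gsat M u G f ∧ gsat M u Gᶜ (gfun G H χ)) v H f' ∧
              gsat (M.restrict fun u => gsat M u G f ∧ gsat M u Gᶜ (gfun G H χ)) v Hᶜ g')
          ⟨⟨w, h1⟩, h'⟩ φ := hc2
  push_neg at hc2'
  obtain ⟨f', hf'⟩ := hc2'
  obtain ⟨hHf', hsat2⟩ := hf' (fun _ => ETop)
  have hHc : gsat (M.restrict fun v => gsat M v G f ∧ gsat M v Gᶜ (gfun G H χ)) ⟨w, h1⟩ Hᶜ
      (fun _ => ETop) := fun i _ v _ => esat_ETop _ _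
  have hφ2 := hsat2 ⟨hHf', hHc⟩
  set θ := EForm.and (kconj G f) (kconj (G ∪ H)ᶜ χ) with hθdef
  have hE1 : ∀ v : M.W, (gsat M v G f ∧ gsat M v Gᶜ (gfun G H χ)) ↔ esat M v θ := by
    intro v
    rw [hθdef]
    simp only [esat_and, esat_kconj]
    exact and_congr Iff.rfl (hg_iff v)
  have hA : ∀ (v : M.W) (hv : gsat M v G f ∧ gsat M v Gᶜ (gfun G H χ)),
      gsat (M.restrict fun u => gsat M u G f ∧ gsat M u Gᶜ (gfun G H χ)) ⟨v, hv⟩ H f' ↔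
      gsat M v H (fun i => erel θ (f' i)) := by
    intro v hv
    constructor
    · intro h i hi v' hv'
      show esat M v' (erel θ (f' i))
      rw [esat_erel]
      intro hθ'
      have hv'S := (hE1 v').2 hθ'
      exact (esat_restrict_congr hE1 (f' i) v' hv'S hθ').1 (h i hi ⟨v', hv'S⟩ hv')
    · intro h i hi v1 hrel
      have h2 : esat M v1.1 (erel θ (f' i)) := h i hi v1.1 hrel
      have h3 := (esat_erel θ (f' i) v1.1).1 h2 ((hE1 v1.1).1 v1.2)
      exact (esat_restrict_congr hE1 (f' i) v1.1 v1.2 ((hE1 v1.1).1 v1.2)).2 h3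
  have hdelta : ∀ v : M.W, gsat M v (G ∪ H) (dfun G H f θ f') ↔
      (gsat M v G f ∧ gsat M v H (fun i => erel θ (f' i))) := by
    intro v
    constructor
    · intro h
      constructor
      · intro i hi v' hv'
        have h2 := h i (Finset.mem_union_left _ hi) v' hv'
        exact ((esat_dfun i).1 h2).1 hi
      · intro i hi v' hv'
        have h2 := h i (Finset.mem_union_right _ hi) v' hv'
        exact ((esat_dfun i).1 h2).2 hi
    · rintro ⟨hf1, hf2⟩ i hi v' hv'
      exact (esat_dfun i).2 ⟨fun hiG => hf1 i hiG v' hv', fun hiH => hf2 i hiH v' hv'⟩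
  have hE2 : ∀ v : M.W,
      (gsat M v (G ∪ H)ᶜ χ ∧ gsat M v (G ∪ H)ᶜᶜ (dfun G H f θ f')) ↔
      ∃ hv : gsat M v G f ∧ gsat M v Gᶜ (gfun G H χ),
        gsat (M.restrict fun u => gsat M u G f ∧ gsat M u Gᶜ (gfun G H χ)) ⟨v, hv⟩ H f' ∧
        gsat (M.restrict fun u => gsat M u G f ∧ gsat M u Gᶜ (gfun G H χ)) ⟨v, hv⟩ Hᶜ
          (fun _ => ETop) := by
    intro v
    rw [compl_compl]
    constructor
    · rintro ⟨hχv, hδv⟩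
      obtain ⟨hGf, hHrel⟩ := (hdelta v).1 hδv
      have hv : gsat M v G f ∧ gsat M v Gᶜ (gfun G H χ) := ⟨hGf, (hg_iff v).2 hχv⟩
      exact ⟨hv, (hA v hv).2 hHrel, fun i _ u _ => esat_ETop _ _⟩
    · rintro ⟨hv, hH', -⟩
      exact ⟨(hg_iff v).1 hv.2, (hdelta v).2 ⟨hv.1, (hA v hv).1 hH'⟩⟩
  refine ⟨dfun G H f θ f', fun _ => ⟨(hE2 w).2 ⟨h1, hHf', hHc⟩, ?_⟩⟩
  have step1 := (sat_double M _ _ φ ⟨w, h1⟩ ⟨hHf', hHc⟩).1 hφ2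
  exact (sat_restrict_congr (fun v => (hE2 v).symm) φ w ⟨h1, hHf', hHc⟩
    ((hE2 w).2 ⟨h1, hHf', hHc⟩)).1 step1
end

section
/- Theorems of CoRGAL are monotone under necessity forms: for all formulas φ, ψ of L_CoRGAL and every necessity form η, if φ → ψ is a theorem of CoRGAL, then η(φ) → η(ψ) is a theorem of CoRGAL. -/
namespace CoRGAL
variable {Agt : Type} [DecidableEq Agt] [Fintype Agt]

lemma tmp1 {A B : Form Agt} (hA : Thm A) (t : Tautology (A.imp B)) : Thm B :=
  (Thm.taut t).mp hA
lemma tmp2 {A B C : Form Agt} (hA : Thm A) (hB : Thm B)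
    (t : Tautology (A.imp (B.imp C))) : Thm C :=
  ((Thm.taut t).mp hA).mp hB
lemma tmp3 {A B C D : Form Agt} (hA : Thm A) (hB : Thm B) (hC : Thm C)
    (t : Tautology (A.imp (B.imp (C.imp D)))) : Thm D :=
  (((Thm.taut t).mp hA).mp hB).mp hC
lemma tmp5 {A B C D E F : Form Agt} (hA : Thm A) (hB : Thm B) (hC : Thm C) (hD : Thm D)
    (hE : Thm E) (t : Tautology (A.imp (B.imp (C.imp (D.imp (E.imp F)))))) : Thm F :=
  (((((Thm.taut t).mp hA).mp hB).mp hC).mp hD).mp hE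

omit [DecidableEq Agt] [Fintype Agt] in
lemma fsize_pos (φ : Form Agt) : 0 < fsize φ := by
  induction φ <;> simp [fsize] <;> omega

omit [DecidableEq Agt] [Fintype Agt] in
lemma dG_toForm (e : EForm Agt) : dG e.toForm = 0 := by
  induction e <;> simp [EForm.toForm, dG, *]

omit [DecidableEq Agt] [Fintype Agt] in
lemma dG_fold (l : List (Form Agt)) (h : ∀ x ∈ l, dG x = 0) :
    dG (l.foldr Form.and Form.top) = 0 := by
  induction l with
  | nil => simp [Form.top, Form.bot, dG]
  | cons a l ih =>
    simp only [List.foldr_cons, dG]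
    rw [h a (by simp), ih (fun x hx => h x (by simp [hx]))]
    simp

lemma dG_GAnn (G : Finset Agt) (f : Agt → EForm Agt) : dG (GAnn G f) = 0 := by
  apply dG_fold
  intro x hx
  simp only [List.mem_map] at hx
  obtain ⟨i, _, rfl⟩ := hx
  simp [dG, dG_toForm]

theorem falseAnn : ∀ (θ φ : Form Agt), Thm ((Form.neg θ).imp (Form.ann θ φ))
  | θ, .atom p =>
    tmp1 (Thm.a5 θ p) (by intro v hn ha; simp only [Form.imp, Form.iff', hn, ha]; tauto)
  | θ, .neg ψ =>
    tmp1 (Thm.a6 θ ψ) (by intro v hn ha; simp only [Form.imp, Form.iff', hn, ha]; tauto)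
  | θ, .and ψ χ =>
    tmp3 (Thm.a7 θ ψ χ) (falseAnn θ ψ) (falseAnn θ χ)
      (by intro v hn ha; simp only [Form.imp, Form.iff', hn, ha]; tauto)
  | θ, .know a ψ =>
    tmp1 (Thm.a8 θ a ψ) (by intro v hn ha; simp only [Form.imp, Form.iff', hn, ha]; tauto)
  | θ, .ann α β =>
    tmp2 (Thm.a9 θ α β) (falseAnn (θ.and (Form.ann θ α)) β)
      (by intro v hn ha; simp only [Form.imp, Form.iff', hn, ha]; tauto)
  | θ, .group G χ φ => by
    refine Thm.r5 (η := NForm.imp (Form.neg θ) (NForm.ann θ NForm.hole)) (fun f => ?_)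
    simp only [NForm.subst]
    exact (tmp3 (Thm.a7 θ χ (Form.ann ((GAnn G f).and χ) φ)) (falseAnn θ χ)
          (falseAnn θ (Form.ann ((GAnn G f).and χ) φ))
          (by intro v hn ha; simp only [Form.imp, Form.iff', hn, ha]; tauto))
  | θ, .coal G φ => by
    refine Thm.r6 (η := NForm.imp (Form.neg θ) (NForm.ann θ NForm.hole)) (fun f => ?_)
    simp only [NForm.subst]
    exact tmp1 (Thm.a6 θ (Form.group Gᶜ (GAnn G f) (Form.neg φ)))
          (by intro v hn ha; simp only [Form.imp, Form.iff', hn, ha]; tauto)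
termination_by θ φ => (dG φ, fsize φ)
decreasing_by
  all_goals simp only [dG, fsize, dG_GAnn, Prod.lex_iff]
  · omega
  · omega
  · have := fsize_pos α; omega
  · omega
  · omega

lemma annK (χ : Form Agt) {φ ψ : Form Agt} (h : Thm (φ.imp ψ)) :
    Thm ((Form.ann χ φ).imp (Form.ann χ ψ)) :=
  tmp5 (Thm.necAnn χ h) (Thm.a6 χ (φ.and (Form.neg ψ))) (Thm.a7 χ φ (Form.neg ψ))
    (Thm.a6 χ ψ) (falseAnn χ ψ)
    (by intro v hn ha; simp only [Form.imp, Form.iff', hn, ha]; tauto)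

end CoRGAL

open CoRGAL

/-- theorems of CoRGAL are monotone under necessity forms:
if ⊢ φ → ψ then ⊢ η(φ) → η(ψ). -/
theorem statement11 (Agt : Type) [DecidableEq Agt] [Fintype Agt]
    (η : NForm Agt) (φ ψ : Form Agt) (h : Thm (φ.imp ψ)) :
    Thm ((η.subst φ).imp (η.subst ψ)) := by
  induction η with
  | hole => exact h
  | imp χ η ih =>
      exact tmp1 ih (by intro v hn ha; simp only [Form.imp, NForm.subst, hn, ha]; tauto)
  | know a η ih => exact Thm.mp (Thm.a1 a _ _) (Thm.necK a ih)
  | ann χ η ih => exact annK χ ih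
end

section
/- If x is a theory and a ∈ A, then K_a x := {φ : K_a φ ∈ x} is a theory. -/
open CoRGAL

/-- if x is a theory and a an agent then K_a x = {φ : K_a φ ∈ x} is a theory. -/
theorem statement13 (Agt : Type) [DecidableEq Agt] [Fintype Agt]
    (x : Set (Form Agt)) (hx : IsTheory x) (a : Agt) :
    IsTheory {φ : Form Agt | Form.know a φ ∈ x} := by
  constructor
  · intro φ h
    exact hx.mem_of_thm (Thm.necK a h)
  · intro φ ψ h1 h2
    exact hx.mp (hx.mp (hx.mem_of_thm (Thm.a1 a φ ψ)) h1) h2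
  · intro η G χ φ h
    exact hx.r5 (NForm.know a η) G χ φ h
  · intro η G φ h
    exact hx.r6 (NForm.know a η) G φ h
end
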